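/- arXiv:1205.5210 — 2 statements merged into one kernel-verified Lean document; each statement's English description precedes it below -/
import Mathlib

section
/- Let d ≥ 2, b > 0, c > 0, and let ψ : ℝ^{d−1} → ℝ be C^∞ on B(0,b) with ∇ψ(0) = 0, with |D^α ψ(z')| ≤ C_α for every multi-index α and z' ∈ B(0,b), and with |det D²ψ(z')| ≥ c for all z' ∈ B(0,b). For ρ ∈ (0,1] define Q_ρ : B(0, b) → ℝ^{d−1} by Q_ρ(z') = −(1/ρ) ∇ψ(ρ z'). Then there exist R ∈ (0, b) and C₁ ≥ 1, depending only on d, c and the bounds C_α (and in particular independent of ρ), such that for all ρ ∈ (0,1] and all x', z' ∈ B(0,R): (1/C₁) |x' − z'| ≤ |Q_ρ(x') − Q_ρ(z')| ≤ C₁ |x' − z'|. In particular, since ∇ψ(0) = 0, also (1/C₁)|z'| ≤ |Q_ρ(z')| ≤ C₁ |z'| for all z' ∈ B(0,R). -/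
open Metric

/-- The partial derivative of `f : ℝ^n → F` in the `i`-th coordinate direction. -/
noncomputable def pderivE {n : ℕ} {F : Type*} [NormedAddCommGroup F] [NormedSpace ℝ F]
    (i : Fin n) (f : EuclideanSpace ℝ (Fin n) → F) : EuclideanSpace ℝ (Fin n) → F :=
  fun x => fderiv ℝ f x (EuclideanSpace.single i 1)

/-- The iterated partial derivative `D^α f` associated with a multi-index `α ∈ ℤ_+^n`. -/
noncomputable def multiPDeriv {n : ℕ} {F : Type*} [NormedAddCommGroup F] [NormedSpace ℝ F]
    (α : Fin n → ℕ) (f : EuclideanSpace ℝ (Fin n) → F) : EuclideanSpace ℝ (Fin n) → F :=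
  (List.finRange n).foldr (fun i g => (pderivE i)^[α i] g) f

/-- The Hessian matrix `(∂²ψ/∂z_i∂z_j)` of `ψ : ℝ^n → ℝ` at a point `z`. -/
noncomputable def hessianMatrix {n : ℕ} (ψ : EuclideanSpace ℝ (Fin n) → ℝ)
    (z : EuclideanSpace ℝ (Fin n)) : Matrix (Fin n) (Fin n) ℝ :=
  Matrix.of fun i j => pderivE i (pderivE j ψ) z

/-- The rescaled gradient map `Q_ρ(z) = -(1/ρ)∇ψ(ρz)`. -/
noncomputable def Qmap {n : ℕ} (ψ : EuclideanSpace ℝ (Fin n) → ℝ) (ρ : ℝ)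
    (z : EuclideanSpace ℝ (Fin n)) : EuclideanSpace ℝ (Fin n) :=
  -(ρ⁻¹ • gradient ψ (ρ • z))

set_option maxHeartbeats 2000000 in
/-- Let `d ≥ 2` and let `ψ : ℝ^{d-1} → ℝ` be smooth on `B(0,b)` with
`∇ψ(0) = 0`, bounded derivatives of all orders, and `|det D²ψ| ≥ c > 0` on `B(0,b)`.
Then there are `R ∈ (0,b)` and `C₁ ≥ 1`, independent of `ρ`, such that for all
`ρ ∈ (0,1]` the map `Q_ρ(z) = -(1/ρ)∇ψ(ρz)` is bi-Lipschitz on `B(0,R)` with constant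
`C₁`; in particular `(1/C₁)|z| ≤ |Q_ρ(z)| ≤ C₁|z|` on `B(0,R)`. -/
theorem Qmap_biLipschitz
    (d : ℕ) (hd : 2 ≤ d) (b c : ℝ) (hb : 0 < b) (hc : 0 < c)
    (ψ : EuclideanSpace ℝ (Fin (d - 1)) → ℝ)
    (hψsmooth : ContDiffOn ℝ (⊤ : ℕ∞) ψ (ball 0 b))
    (hgrad0 : gradient ψ 0 = 0)
    (Cψ : (Fin (d - 1) → ℕ) → ℝ)
    (hψbound : ∀ (α : Fin (d - 1) → ℕ), ∀ z ∈ ball (0 : EuclideanSpace ℝ (Fin (d - 1))) b,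
      |multiPDeriv α ψ z| ≤ Cψ α)
    (hhess : ∀ z ∈ ball (0 : EuclideanSpace ℝ (Fin (d - 1))) b,
      c ≤ |(hessianMatrix ψ z).det|) :
    ∃ R : ℝ, 0 < R ∧ R < b ∧ ∃ C₁ : ℝ, 1 ≤ C₁ ∧
      ∀ ρ ∈ Set.Ioc (0 : ℝ) 1,
        (∀ x' ∈ ball (0 : EuclideanSpace ℝ (Fin (d - 1))) R,
          ∀ z' ∈ ball (0 : EuclideanSpace ℝ (Fin (d - 1))) R,
            C₁⁻¹ * ‖x' - z'‖ ≤ ‖Qmap ψ ρ x' - Qmap ψ ρ z'‖ ∧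
              ‖Qmap ψ ρ x' - Qmap ψ ρ z'‖ ≤ C₁ * ‖x' - z'‖) ∧
        ∀ z' ∈ ball (0 : EuclideanSpace ℝ (Fin (d - 1))) R,
          C₁⁻¹ * ‖z'‖ ≤ ‖Qmap ψ ρ z'‖ ∧ ‖Qmap ψ ρ z'‖ ≤ C₁ * ‖z'‖ := by

  classical
  set s : Set (EuclideanSpace ℝ (Fin (d - 1))) := ball 0 b with hs_def
  have hso : IsOpen s := isOpen_ball
  have h0s : (0 : EuclideanSpace ℝ (Fin (d - 1))) ∈ s := mem_ball_self hb
  have hg : ContDiffOn ℝ (⊤ : ℕ∞) (fderiv ℝ ψ) s := hψsmooth.fderiv_of_isOpen (m := (⊤ : ℕ∞)) hso (by simp)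
  have hG : ContDiffOn ℝ (⊤ : ℕ∞) (gradient ψ) s := by
    have h1 : ContDiff ℝ (⊤ : ℕ∞)
        (((InnerProductSpace.toDual ℝ (EuclideanSpace ℝ (Fin (d - 1)))).symm :
          StrongDual ℝ (EuclideanSpace ℝ (Fin (d - 1))) ≃ₗᵢ[ℝ]
            EuclideanSpace ℝ (Fin (d - 1))) :
          StrongDual ℝ (EuclideanSpace ℝ (Fin (d - 1))) →
            EuclideanSpace ℝ (Fin (d - 1))) :=
      (InnerProductSpace.toDual ℝ (EuclideanSpace ℝ (Fin (d - 1)))).symm.toContinuousLinearEquiv.toContinuousLinearMap.contDiff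
    exact h1.comp_contDiffOn hg
  have hΦc : ContinuousOn (fderiv ℝ (gradient ψ)) s :=
    hG.continuousOn_fderiv_of_isOpen hso (by simp)
  have hGd : ∀ x ∈ s, DifferentiableAt ℝ (gradient ψ) x := fun x hx =>
    (hG.differentiableOn (by simp)).differentiableAt (hso.mem_nhds hx)
  set A : EuclideanSpace ℝ (Fin (d - 1)) →L[ℝ] EuclideanSpace ℝ (Fin (d - 1)) :=
    fderiv ℝ (gradient ψ) 0 with hA_def
  -- coordinate identity
  have hcoord : ∀ i : Fin (d - 1), (fun x => gradient ψ x i) = pderivE i ψ := by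
    intro i
    funext x
    have h1 : (inner ℝ (gradient ψ x) (EuclideanSpace.single i (1 : ℝ)) : ℝ)
        = fderiv ℝ ψ x (EuclideanSpace.single i 1) :=
      InnerProductSpace.toDual_symm_apply
    rw [EuclideanSpace.inner_single_right, conj_trivial, one_mul] at h1
    simpa only [pderivE] using h1
  -- entries of A
  have hentry : ∀ i j : Fin (d - 1), A (EuclideanSpace.single j 1) i = hessianMatrix ψ 0 j i := by
    intro i j
    have hp : HasFDerivAt
        ((EuclideanSpace.proj i :
          EuclideanSpace ℝ (Fin (d - 1)) →L[ℝ] ℝ) ∘ gradient ψ)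
        ((EuclideanSpace.proj i :
          EuclideanSpace ℝ (Fin (d - 1)) →L[ℝ] ℝ).comp A) 0 :=
      ((EuclideanSpace.proj i).hasFDerivAt).comp 0 (hGd 0 h0s).hasFDerivAt
    have heq : ((EuclideanSpace.proj i :
        EuclideanSpace ℝ (Fin (d - 1)) →L[ℝ] ℝ) ∘ gradient ψ)
        = fun x => gradient ψ x i := rfl
    rw [heq] at hp
    have := hp.fderiv
    simp only [hcoord i] at this
    simp [hessianMatrix, pderivE, this]
  have hbm : LinearMap.toMatrix (EuclideanSpace.basisFun (Fin (d - 1)) ℝ).toBasis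
      (EuclideanSpace.basisFun (Fin (d - 1)) ℝ).toBasis A.toLinearMap
      = (hessianMatrix ψ 0).transpose := by
    ext i j
    rw [LinearMap.toMatrix_apply]
    simp only [OrthonormalBasis.coe_toBasis, EuclideanSpace.basisFun_apply,
      OrthonormalBasis.coe_toBasis_repr_apply, EuclideanSpace.basisFun_repr,
      ContinuousLinearMap.coe_coe]
    exact hentry i j
  have hdetH : (hessianMatrix ψ 0).det ≠ 0 := by
    intro h0
    have h := hhess 0 h0s
    rw [h0] at h
    simp at h
    exact absurd h (not_le.2 hc)
  have hdetA : A.det ≠ 0 := by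
    have : A.det = (hessianMatrix ψ 0).det := by
      rw [ContinuousLinearMap.det,
        ← LinearMap.det_toMatrix (EuclideanSpace.basisFun (Fin (d - 1)) ℝ).toBasis, hbm,
        Matrix.det_transpose]
    rw [this]; exact hdetH
  set eC := A.toContinuousLinearEquivOfDetNeZero hdetA with heC_def
  have heC : ∀ w, eC w = A w := fun w => rfl
  set m := ‖(eC.symm : EuclideanSpace ℝ (Fin (d - 1)) →L[ℝ] EuclideanSpace ℝ (Fin (d - 1)))‖
    with hm_def
  haveI : Nonempty (Fin (d - 1)) := ⟨⟨0, by omega⟩⟩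
  obtain ⟨w0, hw0⟩ : ∃ w : EuclideanSpace ℝ (Fin (d - 1)), w ≠ 0 := exists_ne 0
  have hmA : ∀ w : EuclideanSpace ℝ (Fin (d - 1)), ‖w‖ ≤ m * ‖A w‖ := by
    intro w
    have h1 : eC.symm (eC w) = w := eC.symm_apply_apply w
    calc ‖w‖ = ‖eC.symm (eC w)‖ := by rw [h1]
      _ ≤ m * ‖eC w‖ :=
        (eC.symm : EuclideanSpace ℝ (Fin (d - 1)) →L[ℝ] EuclideanSpace ℝ (Fin (d - 1))).le_opNorm _
      _ = m * ‖A w‖ := by rw [heC]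
  have hm0 : 0 < m := by
    rcases lt_or_ge 0 m with h | h
    · exact h
    · exfalso
      have h1 := hmA w0
      have h2 : (0 : ℝ) < ‖w0‖ := norm_pos_iff.2 hw0
      nlinarith [norm_nonneg (A w0)]
  have hε0 : (0 : ℝ) < (2 * m)⁻¹ := by positivity
  -- choose R via continuity of the derivative at 0
  have hΦ0 : ContinuousWithinAt (fderiv ℝ (gradient ψ)) s 0 := hΦc 0 h0s
  rw [Metric.continuousWithinAt_iff] at hΦ0
  obtain ⟨δ, hδ0, hδ⟩ := hΦ0 ((2 * m)⁻¹) hε0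
  refine ⟨min (δ / 2) (b / 2), by positivity, lt_of_le_of_lt (min_le_right _ _) (by linarith), ?_⟩
  set R := min (δ / 2) (b / 2) with hR_def
  have hR0 : (0 : ℝ) < R := by positivity
  have hRs : ball (0 : EuclideanSpace ℝ (Fin (d - 1))) R ⊆ s :=
    ball_subset_ball (le_trans (min_le_right _ _) (by linarith))
  have hRδ : ∀ z ∈ ball (0 : EuclideanSpace ℝ (Fin (d - 1))) R,
      ‖fderiv ℝ (gradient ψ) z - A‖ ≤ (2 * m)⁻¹ := by
    intro z hz
    have hzs : z ∈ s := hRs hz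
    have hzδ : dist z 0 < δ := by
      have := mem_ball.mp hz
      calc dist z 0 < R := this
        _ ≤ δ / 2 := min_le_left _ _
        _ < δ := by linarith
    have h := hδ hzs hzδ
    rw [dist_eq_norm] at h
    exact le_of_lt h
  -- mean value inequality
  have hGdiffR : DifferentiableOn ℝ (fun x => gradient ψ x - A x)
      (ball (0 : EuclideanSpace ℝ (Fin (d - 1))) R) := by
    intro x hx
    exact ((hGd x (hRs hx)).sub (A.differentiableAt)).differentiableWithinAt
  have hbound : ∀ x ∈ ball (0 : EuclideanSpace ℝ (Fin (d - 1))) R,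
      ‖fderivWithin ℝ (fun y => gradient ψ y - A y)
        (ball (0 : EuclideanSpace ℝ (Fin (d - 1))) R) x‖ ≤ (2 * m)⁻¹ := by
    intro x hx
    rw [fderivWithin_of_isOpen isOpen_ball hx]
    rw [fderiv_fun_sub (hGd x (hRs hx)) A.differentiableAt, ContinuousLinearMap.fderiv]
    exact hRδ x hx
  have key : ∀ u ∈ ball (0 : EuclideanSpace ℝ (Fin (d - 1))) R,
      ∀ v ∈ ball (0 : EuclideanSpace ℝ (Fin (d - 1))) R,
      ‖gradient ψ u - gradient ψ v - A (u - v)‖ ≤ (2 * m)⁻¹ * ‖u - v‖ := by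
    intro u hu v hv
    have h := (convex_ball (0 : EuclideanSpace ℝ (Fin (d - 1))) R).norm_image_sub_le_of_norm_fderivWithin_le
      hGdiffR hbound hv hu
    have heq2 : gradient ψ u - A u - (gradient ψ v - A v)
        = gradient ψ u - gradient ψ v - A (u - v) := by
      rw [map_sub]; abel
    rwa [heq2] at h
  have hlo : ∀ u ∈ ball (0 : EuclideanSpace ℝ (Fin (d - 1))) R,
      ∀ v ∈ ball (0 : EuclideanSpace ℝ (Fin (d - 1))) R,
      (2 * m)⁻¹ * ‖u - v‖ ≤ ‖gradient ψ u - gradient ψ v‖ := by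
    intro u hu v hv
    have h1 := key u hu v hv
    have h2 : ‖u - v‖ ≤ m * ‖A (u - v)‖ := hmA (u - v)
    have h3 : ‖A (u - v)‖ ≤ ‖gradient ψ u - gradient ψ v - A (u - v)‖
        + ‖gradient ψ u - gradient ψ v‖ := by
      have := norm_sub_le (A (u - v) - (gradient ψ u - gradient ψ v) + (gradient ψ u - gradient ψ v)) 0
      calc ‖A (u - v)‖
          = ‖-(gradient ψ u - gradient ψ v - A (u - v)) + (gradient ψ u - gradient ψ v)‖ := by
            congr 1; abel
        _ ≤ ‖-(gradient ψ u - gradient ψ v - A (u - v))‖ + ‖gradient ψ u - gradient ψ v‖ :=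
            norm_add_le _ _
        _ = ‖gradient ψ u - gradient ψ v - A (u - v)‖ + ‖gradient ψ u - gradient ψ v‖ := by
            rw [norm_neg]
    have h4 : m⁻¹ * ‖u - v‖ ≤ ‖A (u - v)‖ := by
      rw [inv_mul_le_iff₀ hm0]
      exact h2
    have h5 : m⁻¹ * ‖u - v‖ - (2 * m)⁻¹ * ‖u - v‖ = (2 * m)⁻¹ * ‖u - v‖ := by
      field_simp
      ring
    linarith
  have hup : ∀ u ∈ ball (0 : EuclideanSpace ℝ (Fin (d - 1))) R,
      ∀ v ∈ ball (0 : EuclideanSpace ℝ (Fin (d - 1))) R,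
      ‖gradient ψ u - gradient ψ v‖ ≤ (‖A‖ + (2 * m)⁻¹) * ‖u - v‖ := by
    intro u hu v hv
    have h1 := key u hu v hv
    have h2 : ‖A (u - v)‖ ≤ ‖A‖ * ‖u - v‖ := A.le_opNorm _
    have h3 : ‖gradient ψ u - gradient ψ v‖
        ≤ ‖gradient ψ u - gradient ψ v - A (u - v)‖ + ‖A (u - v)‖ := by
      calc ‖gradient ψ u - gradient ψ v‖
          = ‖(gradient ψ u - gradient ψ v - A (u - v)) + A (u - v)‖ := by congr 1; abel
        _ ≤ _ := norm_add_le _ _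
    nlinarith [norm_nonneg (u - v)]
  -- the constant
  refine ⟨max (max (2 * m) (‖A‖ + (2 * m)⁻¹)) 1, le_max_right _ _, ?_⟩
  set C₁ := max (max (2 * m) (‖A‖ + (2 * m)⁻¹)) 1 with hC₁_def
  have hC₁pos : (0 : ℝ) < C₁ := lt_of_lt_of_le one_pos (le_max_right _ _)
  have hC₁inv : C₁⁻¹ ≤ (2 * m)⁻¹ := by
    apply inv_anti₀ (by positivity)
    exact le_trans (le_max_left _ _) (le_max_left _ _)
  have hC₁up : ‖A‖ + (2 * m)⁻¹ ≤ C₁ := le_trans (le_max_right _ _) (le_max_left _ _)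
  intro ρ hρ
  obtain ⟨hρ0, hρ1⟩ := hρ
  have hmem : ∀ x ∈ ball (0 : EuclideanSpace ℝ (Fin (d - 1))) R,
      ρ • x ∈ ball (0 : EuclideanSpace ℝ (Fin (d - 1))) R := by
    intro x hx
    rw [mem_ball_zero_iff] at hx ⊢
    rw [norm_smul, Real.norm_eq_abs, abs_of_pos hρ0]
    calc ρ * ‖x‖ ≤ 1 * ‖x‖ := mul_le_mul_of_nonneg_right hρ1 (norm_nonneg _)
      _ = ‖x‖ := one_mul _
      _ < R := hx
  have hmain : ∀ x' ∈ ball (0 : EuclideanSpace ℝ (Fin (d - 1))) R,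
      ∀ z' ∈ ball (0 : EuclideanSpace ℝ (Fin (d - 1))) R,
      C₁⁻¹ * ‖x' - z'‖ ≤ ‖Qmap ψ ρ x' - Qmap ψ ρ z'‖ ∧
        ‖Qmap ψ ρ x' - Qmap ψ ρ z'‖ ≤ C₁ * ‖x' - z'‖ := by
    intro x hx z hz
    have hux := hmem x hx
    have huz := hmem z hz
    have hQ : Qmap ψ ρ x - Qmap ψ ρ z
        = ρ⁻¹ • (gradient ψ (ρ • z) - gradient ψ (ρ • x)) := by
      simp only [Qmap, smul_sub]
      abel
    have hnormQ : ‖Qmap ψ ρ x - Qmap ψ ρ z‖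
        = ρ⁻¹ * ‖gradient ψ (ρ • x) - gradient ψ (ρ • z)‖ := by
      rw [hQ, norm_smul, Real.norm_eq_abs, abs_of_pos (inv_pos.2 hρ0), norm_sub_rev]
    have hnuv : ‖ρ • x - ρ • z‖ = ρ * ‖x - z‖ := by
      rw [← smul_sub, norm_smul, Real.norm_eq_abs, abs_of_pos hρ0]
    constructor
    · have h := hlo (ρ • x) hux (ρ • z) huz
      rw [hnuv] at h
      rw [hnormQ]
      calc C₁⁻¹ * ‖x - z‖ ≤ (2 * m)⁻¹ * ‖x - z‖ :=
            mul_le_mul_of_nonneg_right hC₁inv (norm_nonneg _)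
        _ ≤ ρ⁻¹ * ‖gradient ψ (ρ • x) - gradient ψ (ρ • z)‖ := by
            rw [le_inv_mul_iff₀ hρ0]
            calc ρ * ((2 * m)⁻¹ * ‖x - z‖) = (2 * m)⁻¹ * (ρ * ‖x - z‖) := by ring
              _ ≤ _ := h
    · have h := hup (ρ • x) hux (ρ • z) huz
      rw [hnuv] at h
      rw [hnormQ]
      calc ρ⁻¹ * ‖gradient ψ (ρ • x) - gradient ψ (ρ • z)‖
          ≤ ρ⁻¹ * ((‖A‖ + (2 * m)⁻¹) * (ρ * ‖x - z‖)) := by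
            apply mul_le_mul_of_nonneg_left h (le_of_lt (inv_pos.2 hρ0))
        _ = (‖A‖ + (2 * m)⁻¹) * ‖x - z‖ := by
            field_simp
        _ ≤ C₁ * ‖x - z‖ := mul_le_mul_of_nonneg_right hC₁up (norm_nonneg _)
  refine ⟨hmain, ?_⟩
  intro z hz
  have h0R : (0 : EuclideanSpace ℝ (Fin (d - 1))) ∈ ball (0 : EuclideanSpace ℝ (Fin (d - 1))) R :=
    mem_ball_self hR0
  have hQ0 : Qmap ψ ρ 0 = 0 := by
    simp [Qmap, hgrad0]
  have h := hmain z hz 0 h0R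
  rw [hQ0, sub_zero, sub_zero] at h
  exact h
end

section
/- Let d ≥ 2, b > 0, c > 0, and let ψ : ℝ^{d−1} → ℝ be C^∞ on B(0,b) with ∇ψ(0) = 0, |D^α ψ(z')| ≤ C_α for every multi-index α and z' ∈ B(0,b), and |det D²ψ(z')| ≥ c for all z' ∈ B(0,b). For ρ ∈ (0,1] let Q_ρ(z') = −(1/ρ) ∇ψ(ρ z'). Let R ∈ (0,b) be such that Q_ρ is bi-Lipschitz on B(0,R) with constants independent of ρ. Then there exists an open neighborhood 𝓜 of 0 in ℝ^{d−1}, independent of ρ ∈ (0,1], such that for every x' ∈ 𝓜 and every ρ ∈ (0,1] there exists z' in the closed ball of radius R/4 centered at 0 with Q_ρ(z') = x'. -/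
open Metric

set_option maxHeartbeats 1000000 in
/-- Let `d ≥ 2` and let `ψ : ℝ^{d-1} → ℝ` be smooth on `B(0,b)` with
`∇ψ(0) = 0`, bounded derivatives of all orders, and `|det D²ψ| ≥ c > 0` on `B(0,b)`.
Let `R ∈ (0,b)` be such that `Q_ρ(z) = -(1/ρ)∇ψ(ρz)` is bi-Lipschitz on `B(0,R)` with
constants independent of `ρ ∈ (0,1]`. Then there is an open neighborhood `𝓜` of `0`,
independent of `ρ`, such that every `x' ∈ 𝓜` equals `Q_ρ(z')` for some `z'` in the
closed ball of radius `R/4`, for every `ρ ∈ (0,1]`. -/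
theorem Qmap_surjective_near_zero
    (d : ℕ) (hd : 2 ≤ d) (b c : ℝ) (hb : 0 < b) (hc : 0 < c)
    (ψ : EuclideanSpace ℝ (Fin (d - 1)) → ℝ)
    (hψsmooth : ContDiffOn ℝ (⊤ : ℕ∞) ψ (ball 0 b))
    (hgrad0 : gradient ψ 0 = 0)
    (Cψ : (Fin (d - 1) → ℕ) → ℝ)
    (hψbound : ∀ (α : Fin (d - 1) → ℕ), ∀ z ∈ ball (0 : EuclideanSpace ℝ (Fin (d - 1))) b,
      |multiPDeriv α ψ z| ≤ Cψ α)
    (hhess : ∀ z ∈ ball (0 : EuclideanSpace ℝ (Fin (d - 1))) b,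
      c ≤ |(hessianMatrix ψ z).det|)
    (R : ℝ) (hR0 : 0 < R) (hRb : R < b)
    (C₁ : ℝ) (hC₁ : 1 ≤ C₁)
    (hbilip : ∀ ρ ∈ Set.Ioc (0 : ℝ) 1,
      ∀ x' ∈ ball (0 : EuclideanSpace ℝ (Fin (d - 1))) R,
        ∀ z' ∈ ball (0 : EuclideanSpace ℝ (Fin (d - 1))) R,
          C₁⁻¹ * ‖x' - z'‖ ≤ ‖Qmap ψ ρ x' - Qmap ψ ρ z'‖ ∧
            ‖Qmap ψ ρ x' - Qmap ψ ρ z'‖ ≤ C₁ * ‖x' - z'‖) :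
    ∃ 𝓜 : Set (EuclideanSpace ℝ (Fin (d - 1))), IsOpen 𝓜 ∧ (0 : EuclideanSpace ℝ (Fin (d - 1))) ∈ 𝓜 ∧
      ∀ x' ∈ 𝓜, ∀ ρ ∈ Set.Ioc (0 : ℝ) 1,
        ∃ z' ∈ closedBall (0 : EuclideanSpace ℝ (Fin (d - 1))) (R / 4), Qmap ψ ρ z' = x' := by
  classical
  have hmem : ball (0:(EuclideanSpace ℝ (Fin (d - 1)))) b ∈ nhds (0:(EuclideanSpace ℝ (Fin (d - 1)))) := isOpen_ball.mem_nhds (mem_ball_self hb)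
  set f := gradient ψ with hfdef
  -- smoothness of the gradient at 0
  have hψ0 : ContDiffAt ℝ (⊤ : ℕ∞) ψ 0 := hψsmooth.contDiffAt hmem
  have hfd : ContDiffAt ℝ (⊤ : ℕ∞) (fderiv ℝ ψ) 0 := hψ0.fderiv_right (by simp)
  have hfc : ContDiffAt ℝ (⊤ : ℕ∞) f 0 := by
    have := ((InnerProductSpace.toDual ℝ (EuclideanSpace ℝ (Fin (d - 1)))).symm.contDiff.contDiffAt).comp 0 hfd
    exact this
  set A : (EuclideanSpace ℝ (Fin (d - 1))) →L[ℝ] (EuclideanSpace ℝ (Fin (d - 1))) := fderiv ℝ f 0 with hAdef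
  have hstrict : HasStrictFDerivAt f A 0 := hfc.hasStrictFDerivAt (by simp)
  -- identify the derivative with the Hessian
  have key : ∀ i j : Fin (d - 1), pderivE i (pderivE j ψ) 0 = A (EuclideanSpace.single i 1) j := by
    intro i j
    have hco : pderivE j ψ = fun x => f x j := by
      funext x
      have : fderiv ℝ ψ x (EuclideanSpace.single j 1)
          = inner ℝ (f x) (EuclideanSpace.single j (1:ℝ)) := by
        rw [hfdef]
        simp only [gradient]
        rw [InnerProductSpace.toDual_symm_apply]
      simp only [pderivE, this, EuclideanSpace.inner_single_right]
      simp
    have hproj : (fun x : (EuclideanSpace ℝ (Fin (d - 1))) => f x j) = fun x => (EuclideanSpace.proj j) (f x) := rfl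
    have hfder : fderiv ℝ (fun x : (EuclideanSpace ℝ (Fin (d - 1))) => f x j) 0
        = (EuclideanSpace.proj j).comp A := by
      rw [hproj]
      exact ((EuclideanSpace.proj (𝕜 := ℝ) j).hasFDerivAt.comp (0:(EuclideanSpace ℝ (Fin (d - 1))))
        hstrict.hasFDerivAt).fderiv
    rw [hco]
    simp only [pderivE, hfder, ContinuousLinearMap.coe_comp', Function.comp_apply]
    rfl
  -- nonvanishing determinant
  have h0b : (0:(EuclideanSpace ℝ (Fin (d - 1)))) ∈ ball (0:(EuclideanSpace ℝ (Fin (d - 1)))) b := mem_ball_self hb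
  have hdet0 : (hessianMatrix ψ 0).det ≠ 0 := by
    intro h
    have := hhess 0 h0b
    rw [h] at this
    simp at this
    linarith
  set B := (EuclideanSpace.basisFun (Fin (d - 1)) ℝ).toBasis with hB
  have hmx : LinearMap.toMatrix B B (A : (EuclideanSpace ℝ (Fin (d - 1))) →ₗ[ℝ] (EuclideanSpace ℝ (Fin (d - 1)))) = (hessianMatrix ψ 0).transpose := by
    ext i j
    rw [LinearMap.toMatrix_apply]
    have hBj : B j = EuclideanSpace.single j 1 := by
      rw [hB, OrthonormalBasis.coe_toBasis, EuclideanSpace.basisFun_apply]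
    have hrep : ∀ x : (EuclideanSpace ℝ (Fin (d - 1))), B.repr x i = x i := fun x => by
      rw [hB, OrthonormalBasis.coe_toBasis_repr_apply, EuclideanSpace.basisFun_repr]
    rw [hrep, hBj]
    simp only [Matrix.transpose_apply, hessianMatrix, Matrix.of_apply]
    rw [key j i]
    rfl
  have hdetA : LinearMap.det (A : (EuclideanSpace ℝ (Fin (d - 1))) →ₗ[ℝ] (EuclideanSpace ℝ (Fin (d - 1)))) ≠ 0 := by
    rw [← LinearMap.det_toMatrix B, hmx, Matrix.det_transpose]
    exact hdet0
  set A' : (EuclideanSpace ℝ (Fin (d - 1))) ≃L[ℝ] (EuclideanSpace ℝ (Fin (d - 1))) :=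
    (LinearMap.equivOfDetNeZero (A : (EuclideanSpace ℝ (Fin (d - 1))) →ₗ[ℝ] (EuclideanSpace ℝ (Fin (d - 1)))) hdetA).toContinuousLinearEquiv with hA'
  have hcoe : (A' : (EuclideanSpace ℝ (Fin (d - 1))) →L[ℝ] (EuclideanSpace ℝ (Fin (d - 1)))) = A := by
    refine ContinuousLinearMap.ext fun x => ?_
    show (LinearMap.equivOfDetNeZero (A : (EuclideanSpace ℝ (Fin (d - 1))) →ₗ[ℝ] (EuclideanSpace ℝ (Fin (d - 1)))) hdetA).toContinuousLinearEquiv x = A x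
    simp [LinearMap.equivOfDetNeZero, LinearEquiv.ofIsUnitDet_apply]
  have hstrict' : HasStrictFDerivAt f (A' : (EuclideanSpace ℝ (Fin (d - 1))) →L[ℝ] (EuclideanSpace ℝ (Fin (d - 1)))) 0 := by rw [hcoe]; exact hstrict
  -- the local inverse
  set g := hstrict'.localInverse f A' 0 with hg
  have hf0 : f 0 = 0 := hgrad0
  have hg0 : g 0 = 0 := by
    have := hstrict'.localInverse_apply_image
    rwa [hf0] at this
  have hginv : HasStrictFDerivAt g ((A'.symm : (EuclideanSpace ℝ (Fin (d - 1))) →L[ℝ] (EuclideanSpace ℝ (Fin (d - 1))))) 0 := by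
    have := hstrict'.to_localInverse
    rwa [hf0] at this
  obtain ⟨K, s, hs, hlip⟩ := hginv.exists_lipschitzOnWith
  have hright : {y : (EuclideanSpace ℝ (Fin (d - 1))) | f (g y) = y} ∈ nhds (0:(EuclideanSpace ℝ (Fin (d - 1)))) := by
    have := hstrict'.eventually_right_inverse
    rw [hf0] at this
    exact this
  obtain ⟨r, hr0, hrsub⟩ := Metric.mem_nhds_iff.1 (Filter.inter_mem hs hright)
  set ε : ℝ := min r (R / (4 * (K + 1))) with hε
  have hKpos : (0:ℝ) < (K:ℝ) + 1 := by positivity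
  have hε0 : 0 < ε := lt_min hr0 (by positivity)
  refine ⟨ball 0 ε, isOpen_ball, mem_ball_self hε0, ?_⟩
  intro x' hx' ρ hρ
  obtain ⟨hρ0, hρ1⟩ := hρ
  have hx'n : ‖x'‖ < ε := by simpa [mem_ball, dist_eq_norm] using hx'
  have hx'0 : 0 ≤ ‖x'‖ := norm_nonneg _
  set y : (EuclideanSpace ℝ (Fin (d - 1))) := -(ρ • x') with hy
  have hyn : ‖y‖ = ρ * ‖x'‖ := by
    rw [hy, norm_neg, norm_smul, Real.norm_eq_abs, abs_of_pos hρ0]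
  have hynlt : ‖y‖ < r := by
    have : ρ * ‖x'‖ ≤ ‖x'‖ := by nlinarith
    calc ‖y‖ ≤ ‖x'‖ := by rw [hyn]; exact this
    _ < ε := hx'n
    _ ≤ r := min_le_left _ _
  have hymem : y ∈ ball (0:(EuclideanSpace ℝ (Fin (d - 1)))) r := by simpa [mem_ball, dist_eq_norm] using hynlt
  have h0mem : (0:(EuclideanSpace ℝ (Fin (d - 1)))) ∈ ball (0:(EuclideanSpace ℝ (Fin (d - 1)))) r := mem_ball_self hr0
  have hys : y ∈ s := (hrsub hymem).1
  have h0s : (0:(EuclideanSpace ℝ (Fin (d - 1)))) ∈ s := (hrsub h0mem).1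
  have hfy : f (g y) = y := (hrsub hymem).2
  set z' : (EuclideanSpace ℝ (Fin (d - 1))) := ρ⁻¹ • g y with hz
  have hρne : ρ ≠ 0 := ne_of_gt hρ0
  have hρz : ρ • z' = g y := by rw [hz, smul_inv_smul₀ hρne]
  refine ⟨z', ?_, ?_⟩
  · -- norm bound
    have hd : dist (g y) (g 0) ≤ K * dist y 0 := hlip.dist_le_mul y hys 0 h0s
    rw [hg0, dist_zero_right, dist_zero_right, hyn] at hd
    have hzn : ‖z'‖ = ρ⁻¹ * ‖g y‖ := by
      rw [hz, norm_smul, Real.norm_eq_abs, abs_of_pos (inv_pos.2 hρ0)]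
    have h1 : ‖z'‖ ≤ (K:ℝ) * ‖x'‖ := by
      rw [hzn]
      have hrw : ρ⁻¹ * ((K:ℝ) * (ρ * ‖x'‖)) = (K:ℝ) * ‖x'‖ := by
        field_simp
      calc ρ⁻¹ * ‖g y‖ ≤ ρ⁻¹ * ((K:ℝ) * (ρ * ‖x'‖)) := by
            apply mul_le_mul_of_nonneg_left hd (le_of_lt (inv_pos.2 hρ0))
        _ = (K:ℝ) * ‖x'‖ := hrw
    have hx'le : ‖x'‖ ≤ R / (4 * ((K:ℝ) + 1)) := le_of_lt (lt_of_lt_of_le hx'n (min_le_right _ _))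
    have h2 : (K:ℝ) * ‖x'‖ ≤ R / 4 := by
      have hK0 : (0:ℝ) ≤ (K:ℝ) := K.coe_nonneg
      have := mul_le_mul_of_nonneg_left hx'le hK0
      calc (K:ℝ) * ‖x'‖ ≤ (K:ℝ) * (R / (4 * ((K:ℝ) + 1))) := this
        _ ≤ R / 4 := by
            rw [mul_div_assoc', div_le_div_iff₀ (by positivity) (by norm_num)]
            nlinarith [hR0.le, hK0]
    rw [mem_closedBall, dist_zero_right]
    linarith
  · -- Qmap equation
    rw [Qmap, hρz]
    show -(ρ⁻¹ • f (g y)) = x'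
    rw [hfy, hy]
    rw [smul_neg, neg_neg, smul_smul, inv_mul_cancel₀ hρne, one_smul]
end
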